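/- arXiv:2006.10590 — 4 statements merged into one kernel-verified Lean document; each statement's English description precedes it below -/
import Mathlib

section
/- Let K be a number field of odd degree over ℚ, let ι : K → ℂ be a complex embedding, and let r > 0 be a positive real number. Then there are at most 2 elements x ∈ K with |ι(x)| = r. -/
/-!
If `|ι z| = 1` and `ι z` is not real, then `w = z + z⁻¹` has real image, since `ι z⁻¹` is the
conjugate of `ι z`, so `ℚ⟮w⟯` embeds into `ℝ` and does not contain `z`. As `z` is a root of
`X² - w X + 1`, it has degree `2` over `ℚ⟮w⟯`, and `[K : ℚ]` is even. So in odd degree every element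
of absolute value `1` is `±1`, and two elements of the same absolute value differ by a sign.
-/

open IntermediateField Polynomial

theorem minpoly.natDegree_le_two_of_add_inv_mem {F E : Type*} [Field F] [Field E] [Algebra F E]
    {z : E} (hz : z ≠ 0) {w : F} (hw : algebraMap F E w = z + z⁻¹) :
    (minpoly F z).natDegree ≤ 2 := by
  have hroot : Polynomial.aeval z (X ^ 2 - C w * X + 1 : F[X]) = 0 := by
    simp only [map_add, map_sub, map_mul, map_pow, aeval_X, aeval_C, map_one, hw]
    field_simp
    ring
  have hdeg : (X ^ 2 - C w * X + 1 : F[X]).natDegree = 2 := by compute_degree!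
  have hne : (X ^ 2 - C w * X + 1 : F[X]) ≠ 0 := by
    intro h; rw [h] at hdeg; simp at hdeg
  exact hdeg ▸ natDegree_le_of_dvd (minpoly.dvd F z hroot) hne

theorem two_dvd_finrank_of_notMem_adjoin_add_inv {F E : Type*} [Field F] [Field E] [Algebra F E]
    [FiniteDimensional F E] {z : E} (hz : z ∉ F⟮z + z⁻¹⟯) : 2 ∣ Module.finrank F E := by
  set M := F⟮z + z⁻¹⟯
  have hz0 : z ≠ 0 := by rintro rfl; simp at hz
  have hint : IsIntegral M z := .of_finite M z
  have hdeg : (minpoly M z).natDegree = 2 := by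
    refine le_antisymm (minpoly.natDegree_le_two_of_add_inv_mem hz0
      (w := ⟨z + z⁻¹, mem_adjoin_simple_self F _⟩) rfl) ?_
    rw [minpoly.two_le_natDegree_iff hint]
    rintro ⟨y, hy⟩
    exact hz (hy ▸ y.prop)
  have hM : 2 ∣ Module.finrank M E := hdeg ▸ minpoly.degree_dvd hint
  exact hM.trans (Dvd.intro_left _ (Module.finrank_mul_finrank F M E))

theorem RingHom.im_eq_zero_of_mem_adjoin {K : Type*} [Field K] [CharZero K] (ι : K →+* ℂ)
    {w x : K} (hw : (ι w).im = 0) (hx : x ∈ ℚ⟮w⟯) : (ι x).im = 0 := by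
  let R : IntermediateField ℚ K :=
    (Complex.ofRealHom.toRatAlgHom.fieldRange).comap ι.toRatAlgHom
  have hmem : ∀ y, y ∈ R ↔ (ι y).im = 0 := by
    intro y
    change ι.toRatAlgHom y ∈ Complex.ofRealHom.toRatAlgHom.fieldRange ↔ _
    rw [AlgHom.mem_fieldRange]
    exact ⟨fun ⟨a, ha⟩ => by simpa using congrArg Complex.im ha.symm,
      fun h => ⟨(ι y).re, Complex.ext (by simp) (by simp [h])⟩⟩
  exact (hmem x).1 ((adjoin_simple_le_iff.2 ((hmem w).2 hw)) hx)

theorem Complex.im_add_inv_eq_zero {u : ℂ} (hu : ‖u‖ = 1) : (u + u⁻¹).im = 0 := by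
  simp [Complex.inv_eq_conj hu]

namespace RingHom

variable {K : Type*} [Field K] [NumberField K] (ι : K →+* ℂ)

theorem im_eq_zero_of_norm_eq_one (hodd : Odd (Module.finrank ℚ K)) {z : K} (hz : ‖ι z‖ = 1) :
    (ι z).im = 0 := by
  by_contra him
  have hreal : (ι (z + z⁻¹)).im = 0 := by
    simpa only [map_add, map_inv₀] using Complex.im_add_inv_eq_zero hz
  have hz : z ∉ ℚ⟮z + z⁻¹⟯ := fun h => him (ι.im_eq_zero_of_mem_adjoin hreal h)
  exact Nat.not_even_iff_odd.2 hodd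
    (even_iff_two_dvd.2 (two_dvd_finrank_of_notMem_adjoin_add_inv hz))

theorem eq_one_or_eq_neg_one_of_norm_eq_one (hodd : Odd (Module.finrank ℚ K)) {z : K}
    (hz : ‖ι z‖ = 1) : z = 1 ∨ z = -1 := by
  have hre : ι z = ((ι z).re : ℂ) :=
    Complex.ext rfl (by simp [ι.im_eq_zero_of_norm_eq_one hodd hz])
  have habs : |(ι z).re| = 1 := by rwa [hre, Complex.norm_real, Real.norm_eq_abs] at hz
  rcases (abs_eq zero_le_one).1 habs with h | h
  · exact .inl (ι.injective (by rw [hre, h]; simp))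
  · exact .inr (ι.injective (by rw [hre, h]; simp))

theorem eq_or_eq_neg_of_norm_eq (hodd : Odd (Module.finrank ℚ K)) {x y : K}
    (h : ‖ι x‖ = ‖ι y‖) : x = y ∨ x = -y := by
  rcases eq_or_ne y 0 with rfl | hy
  · exact .inl (by simpa using h)
  have hxy : ‖ι (x / y)‖ = 1 := by
    rw [map_div₀, norm_div, h, div_self (by simpa using hy)]
  rcases ι.eq_one_or_eq_neg_one_of_norm_eq_one hodd hxy with h | h
  · exact .inl ((div_eq_one_iff_eq hy).1 h)
  · exact .inr (((div_eq_iff hy).1 h).trans (neg_one_mul y))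

end RingHom

theorem stmt_0_general (K : Type*) [Field K] [NumberField K]
    (hodd : Odd (Module.finrank ℚ K)) (ι : K →+* ℂ) (r : ℝ) :
    {x : K | ‖ι x‖ = r}.Finite ∧
      {x : K | ‖ι x‖ = r}.ncard ≤ 2 := by
  rcases Set.eq_empty_or_nonempty {x : K | ‖ι x‖ = r} with h | ⟨y, hy⟩
  · simp [h]
  have hsub : {x : K | ‖ι x‖ = r} ⊆ {y, -y} := fun x hx =>
    ι.eq_or_eq_neg_of_norm_eq hodd (hx.trans hy.symm)
  have hfin : ({y, -y} : Set K).Finite := Set.toFinite _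
  exact ⟨hfin.subset hsub,
    (Set.ncard_le_ncard hsub hfin).trans ((Set.ncard_insert_le _ _).trans (by simp))⟩

/-- Let `K` be a number field of odd degree over `ℚ`, let `ι : K → ℂ` be a complex
embedding, and let `r > 0`. Then there are at most 2 elements `x ∈ K` with `|ι x| = r`. -/
theorem stmt_0 (K : Type*) [Field K] [NumberField K]
    (hodd : Odd (Module.finrank ℚ K)) (ι : K →+* ℂ) (r : ℝ) (hr : 0 < r) :
    {x : K | ‖ι x‖ = r}.Finite ∧
      {x : K | ‖ι x‖ = r}.ncard ≤ 2 :=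
  stmt_0_general K hodd ι r
end

section
/- Let K be a number field, α ∈ K nonzero, and suppose the set C_α = {x ∈ K : |ι(x)| = |ι(α)| for all embeddings ι : K → ℂ} contains at least 3 elements. Then K contains a CM subfield. -/
/-- A field `L` is a CM field if it is totally imaginary (no real embeddings)
and a quadratic extension of a totally real subfield. -/
def IsCMField (L : Type*) [Field L] : Prop :=
  (∀ φ : L →+* ℂ, ¬ NumberField.ComplexEmbedding.IsReal φ) ∧
    ∃ F : Subfield L, (∀ ψ : F →+* ℂ, NumberField.ComplexEmbedding.IsReal ψ) ∧
      Module.finrank F L = 2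

/-
If `x`, `y`, `z` are distinct elements with the absolute values of `α` at every embedding, then
one of `β = x / y`, `β = x / z` differs from `±1` and lies on the unit circle at every embedding.
A real point of the unit circle is `±1`, so no embedding of `ℚ(β)` is real, while
`β + β⁻¹ = β + conj β` is real at every embedding. Hence `β` lies outside the maximal real
subfield `F` of `ℚ(β)` but is a root of `X² - (β + β⁻¹) X + 1 ∈ F[X]`, so `ℚ(β) = F(β)` is
quadratic over `F`.
-/

open NumberField.ComplexEmbedding IntermediateField Polynomial
open NumberField (maximalRealSubfield)
open scoped ComplexConjugate

theorem Complex.eq_one_or_eq_neg_one_of_norm_eq_one_of_conj_eq {w : ℂ} (hw : ‖w‖ = 1)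
    (hconj : conj w = w) : w = 1 ∨ w = -1 := by
  rw [← Complex.conj_eq_iff_re.mp hconj, Complex.norm_real, Real.norm_eq_abs] at hw
  rw [← Complex.conj_eq_iff_re.mp hconj]
  rcases abs_eq zero_le_one |>.mp hw with h | h <;> simp [h]

theorem IntermediateField.finrank_eq_two_of_adjoin_simple_eq_top {F L : Type*} [Field F]
    [Field L] [Algebra F L] {b : L} (htop : F⟮b⟯ = ⊤) (hb : b ∉ (algebraMap F L).range)
    {p : F[X]} (hp : p.natDegree = 2) (hroot : aeval b p = 0) :
    Module.finrank F L = 2 := by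
  have hp0 : p ≠ 0 := by rintro rfl; simp at hp
  have hint : IsIntegral F b := IsAlgebraic.isIntegral ⟨p, hp0, hroot⟩
  have hle : (minpoly F b).natDegree ≤ 2 :=
    hp ▸ natDegree_le_of_dvd (minpoly.dvd F b hroot) hp0
  have hne : (minpoly F b).natDegree ≠ 1 := mt minpoly.natDegree_eq_one_iff.mp hb
  have hpos := minpoly.natDegree_pos hint
  rw [← finrank_top', ← htop, adjoin.finrank hint]
  omega

section UnitCircle

variable {L : Type*} [Field L] {b : L}

theorem conj_ne_self_of_norm_eq_one (φ : L →+* ℂ) (hφ : ‖φ b‖ = 1) (h1 : b ≠ 1) (h2 : b ≠ -1) :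
    conj (φ b) ≠ φ b := by
  intro hconj
  rcases Complex.eq_one_or_eq_neg_one_of_norm_eq_one_of_conj_eq hφ hconj with h | h
  · exact h1 (φ.injective (by rw [h, map_one]))
  · exact h2 (φ.injective (by rw [h, map_neg, map_one]))

theorem add_inv_mem_maximalRealSubfield_of_norm_eq_one (hb : ∀ φ : L →+* ℂ, ‖φ b‖ = 1) :
    b + b⁻¹ ∈ maximalRealSubfield L := by
  intro φ
  rw [map_add, map_inv₀, Complex.inv_eq_conj (hb φ), star_add, Complex.star_def,
    Complex.conj_conj, add_comm]

variable (hb : ∀ φ : L →+* ℂ, ‖φ b‖ = 1) (h1 : b ≠ 1) (h2 : b ≠ -1)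
include hb h1 h2

theorem not_isReal_of_norm_eq_one (φ : L →+* ℂ) : ¬ IsReal φ := fun hreal =>
  conj_ne_self_of_norm_eq_one φ (hb φ) h1 h2 (RingHom.congr_fun (isReal_iff.mp hreal) b)

theorem notMem_maximalRealSubfield_of_norm_eq_one [Nonempty (L →+* ℂ)] :
    b ∉ maximalRealSubfield L := fun hmem =>
  let φ : L →+* ℂ := Classical.arbitrary _
  conj_ne_self_of_norm_eq_one φ (hb φ) h1 h2 (hmem φ)

end UnitCircle

theorem IntermediateField.adjoin_simple_gen_eq_top (F : Type*) {E : Type*} [Field F] [Field E]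
    [Algebra F E] (α : E) : F⟮AdjoinSimple.gen F α⟯ = ⊤ := by
  apply lift_injective
  rw [lift_adjoin_simple, AdjoinSimple.coe_gen, lift_top]

theorem isCMField_of_adjoin_eq_top {L : Type*} [Field L] [NumberField L] {b : L}
    (htop : ℚ⟮b⟯ = ⊤) (hb : ∀ φ : L →+* ℂ, ‖φ b‖ = 1) (h1 : b ≠ 1) (h2 : b ≠ -1) :
    IsCMField L := by
  have hb0 : b ≠ 0 := by
    rintro rfl
    simpa using hb (Classical.arbitrary _)
  have hγ := add_inv_mem_maximalRealSubfield_of_norm_eq_one hb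
  have hroot : aeval b (X ^ 2 - C ⟨b + b⁻¹, hγ⟩ * X + 1 : (maximalRealSubfield L)[X]) = 0 := by
    simp only [map_add, aeval_sub, map_pow, aeval_X, map_mul, aeval_C, map_one]
    change b ^ 2 - (b + b⁻¹) * b + 1 = 0
    field_simp
    ring
  refine ⟨not_isReal_of_norm_eq_one hb h1 h2, maximalRealSubfield L,
    NumberField.IsTotallyReal.complexEmbedding_isReal,
    finrank_eq_two_of_adjoin_simple_eq_top (adjoin_eq_top_of_adjoin_eq_top ℚ htop) ?_
      (by compute_degree!) hroot⟩
  rintro ⟨c, rfl⟩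
  exact notMem_maximalRealSubfield_of_norm_eq_one hb h1 h2 c.2

theorem exists_isCMField_subfield_of_norm_eq_one {K : Type*} [Field K] [NumberField K] {β : K}
    (hβ : ∀ ι : K →+* ℂ, ‖ι β‖ = 1) (h1 : β ≠ 1) (h2 : β ≠ -1) :
    ∃ L : Subfield K, IsCMField L := by
  suffices IsCMField ℚ⟮β⟯ from ⟨ℚ⟮β⟯.toSubfield, this⟩
  refine isCMField_of_adjoin_eq_top (adjoin_simple_gen_eq_top ℚ β)
    (fun φ => ?_) (fun h => h1 ?_) (fun h => h2 ?_)
  · rw [← lift_algebraMap_apply K φ, AdjoinSimple.algebraMap_gen]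
    exact hβ _
  · rw [← AdjoinSimple.algebraMap_gen ℚ β, h, map_one]
  · rw [← AdjoinSimple.algebraMap_gen ℚ β, h, map_neg, map_one]

section SameAbsoluteValues

variable {K : Type*} [Field K] {α u v : K}

theorem ne_zero_of_forall_norm_eq [Nonempty (K →+* ℂ)] (hα : α ≠ 0)
    (hu : ∀ ι : K →+* ℂ, ‖ι u‖ = ‖ι α‖) : u ≠ 0 := by
  rintro rfl
  simpa [hα] using (hu (Classical.arbitrary _)).symm

theorem norm_div_eq_one_of_forall_norm_eq (hα : α ≠ 0) (hu : ∀ ι : K →+* ℂ, ‖ι u‖ = ‖ι α‖)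
    (hv : ∀ ι : K →+* ℂ, ‖ι v‖ = ‖ι α‖) (ι : K →+* ℂ) : ‖ι (u / v)‖ = 1 := by
  rw [map_div₀, norm_div, hu, hv, div_self (by simpa using hα)]

end SameAbsoluteValues

/-- If `K` is a number field, `α ∈ K` is nonzero, and the set
`C_α = {x ∈ K : |ι x| = |ι α| for all embeddings ι : K → ℂ}` contains at least 3
elements, then `K` contains a CM subfield. -/
theorem stmt_2 (K : Type*) [Field K] [NumberField K] (α : K) (hα : α ≠ 0)
    (x y z : K) (hxy : x ≠ y) (hxz : x ≠ z) (hyz : y ≠ z)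
    (hx : ∀ ι : K →+* ℂ, ‖ι x‖ = ‖ι α‖)
    (hy : ∀ ι : K →+* ℂ, ‖ι y‖ = ‖ι α‖)
    (hz : ∀ ι : K →+* ℂ, ‖ι z‖ = ‖ι α‖) :
    ∃ L : Subfield K, IsCMField L := by
  obtain ⟨v, hv, hxv, hne⟩ : ∃ v : K, (∀ ι : K →+* ℂ, ‖ι v‖ = ‖ι α‖) ∧ x ≠ v ∧ x / v ≠ -1 := by
    by_cases hy' : x / y = -1
    · refine ⟨z, hz, hxz, fun hz' => hyz ?_⟩
      rw [div_eq_iff (ne_zero_of_forall_norm_eq hα hy)] at hy'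
      rw [div_eq_iff (ne_zero_of_forall_norm_eq hα hz)] at hz'
      linear_combination hy' - hz'
    · exact ⟨y, hy, hxy, hy'⟩
  have hne1 : x / v ≠ 1 := by rwa [Ne, div_eq_one_iff_eq (ne_zero_of_forall_norm_eq hα hv)]
  exact exists_isCMField_subfield_of_norm_eq_one
    (norm_div_eq_one_of_forall_norm_eq hα hx hv) hne1 hne
end

section
/- Let K be a number field containing a CM subfield. Then for any nonzero α ∈ K, the set {x ∈ K : |ι(x)| = |ι(α)| for all embeddings ι : K → ℂ} is infinite. -/
theorem IsCMField.toNumberFieldIsCMField {L : Type*} [Field L] [CharZero L]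
    [Algebra.IsIntegral ℚ L] (hL : IsCMField L) : NumberField.IsCMField L := by
  obtain ⟨hImag, F, hReal, hrank⟩ := hL
  have : NumberField.IsTotallyReal F :=
    ⟨fun _ ↦ NumberField.InfinitePlace.isReal_iff.mpr (hReal _)⟩
  have : NumberField.IsTotallyComplex L :=
    ⟨fun _ ↦ NumberField.InfinitePlace.isComplex_iff.mpr (hImag _)⟩
  have : Algebra.IsQuadraticExtension F L := ⟨hrank⟩
  exact NumberField.IsCMField.ofCMExtension F L

namespace NumberField.IsCMField

variable {K : Type*} [Field K] [CharZero K] [IsCMField K] [Algebra.IsIntegral ℚ K]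

theorem exists_complexConj_ne : ∃ β : K, complexConj K β ≠ β := by
  by_contra! h
  exact complexConj_ne_one K (AlgEquiv.ext h)

theorem norm_div_complexConj (φ : K →+* ℂ) {x : K} (hx : x ≠ 0) :
    ‖φ (x / complexConj K x)‖ = 1 := by
  rw [map_div₀, complexEmbedding_complexConj, norm_div, Complex.norm_conj,
    div_self (norm_ne_zero_iff.mpr ((map_ne_zero φ).mpr hx))]

theorem infinite_setOf_forall_norm_eq_one :
    {x : K | ∀ φ : K →+* ℂ, ‖φ x‖ = 1}.Infinite := by
  obtain ⟨β, hβ⟩ := exists_complexConj_ne (K := K)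
  have hconj (t : ℚ) : complexConj K (t + β) = t + complexConj K β := by
    rw [map_add, map_ratCast]
  -- `t + σ β = 0` would make `σ β` rational, hence fixed by `σ`, hence equal to `σ (σ β) = β`.
  have hne (t : ℚ) : (t : K) + complexConj K β ≠ 0 := by
    intro h
    have hσβ : complexConj K β = -t := eq_neg_of_add_eq_zero_right h
    apply hβ
    rw [hσβ, ← complexConj_apply_apply K β, hσβ, map_neg, map_ratCast]
  refine Set.infinite_of_injective_forall_mem (α := ℚ)
    (f := fun t ↦ (t + β) / complexConj K (t + β)) ?_ ?_
  · intro s t hst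
    simp only [hconj, div_eq_div_iff (hne s) (hne t)] at hst
    have : ((s : K) - t) * (complexConj K β - β) = 0 := by linear_combination hst
    exact_mod_cast sub_eq_zero.mp ((mul_eq_zero.mp this).resolve_right (sub_ne_zero.mpr hβ))
  · intro t φ
    refine norm_div_complexConj φ fun h ↦ hne t ?_
    rw [← hconj, h, map_zero]

end NumberField.IsCMField

/-- Let `K` be a number field containing a CM subfield.  Then for any nonzero `α ∈ K`,
the set `{x ∈ K : |ι x| = |ι α| for all embeddings ι : K → ℂ}` is infinite. -/
theorem stmt_3 (K : Type*) [Field K] [NumberField K]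
    (hCM : ∃ L : Subfield K, IsCMField L) (α : K) (hα : α ≠ 0) :
    {x : K | ∀ ι : K →+* ℂ, ‖ι x‖ = ‖ι α‖}.Infinite := by
  obtain ⟨L, hL⟩ := hCM
  have := hL.toNumberFieldIsCMField
  have hunit : {x : K | ∀ ι : K →+* ℂ, ‖ι x‖ = 1}.Infinite := by
    refine (NumberField.IsCMField.infinite_setOf_forall_norm_eq_one.image
      L.subtype_injective.injOn).mono ?_
    rintro _ ⟨y, hy, rfl⟩ ι
    exact hy (ι.comp L.subtype)
  refine (hunit.image (mul_right_injective₀ hα).injOn).mono ?_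
  rintro _ ⟨x, hx, rfl⟩ ι
  rw [map_mul, norm_mul, hx ι, mul_one]
end

section
/- Let K ⊆ L be number fields with L/K of degree q (q an odd prime) of the form L = K(α^{1/q}) where α ∈ K is not a qth power in K. Let p be a finite prime of K not dividing q, unramified in L, with residue field κ of size N. Then the number of primes of L above p is 1 if the reduction of α is not a qth power in κ×, and is 1 + (q−1)/a otherwise, where a is the multiplicative order of N modulo q. -/
/-!
Since `p` is prime to `q α` and `f'(β) β = q α` for `f = X ^ q - α`, the prime `p` is prime
to the conductor of `𝓞_K[β]`; by Kummer–Dedekind the primes of `L` above `p` then correspond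
to the irreducible factors of the separable polynomial `X ^ q - ᾱ` over the residue field `κ`.
If `ᾱ` is not a `q`th power this polynomial is irreducible. If `ᾱ = y ^ q`, the substitution
`X ↦ y X` turns it into `X ^ q - 1 = (X - 1) Φ_q`, and every irreducible factor of `Φ_q` over
`κ` has degree the order `a` of `N = |κ|` modulo `q`, so there are `(q - 1) / a` of them.
-/

open Polynomial UniqueFactorizationMonoid NumberField

theorem UniqueFactorizationMonoid.card_normalizedFactors_map_mulEquiv
    {α β : Type*} [CommMonoidWithZero α] [NormalizationMonoid α] [UniqueFactorizationMonoid α]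
    [CommMonoidWithZero β] [NormalizationMonoid β] [UniqueFactorizationMonoid β]
    {F : Type*} [EquivLike F α β] [MulEquivClass F α β] (e : F) (a : α) :
    Multiset.card (normalizedFactors (e a)) = Multiset.card (normalizedFactors a) := by
  rcases eq_or_ne a 0 with rfl | ha
  · simp
  have hea : e a ≠ 0 := by simpa using ha
  rw [← Multiset.card_map e (normalizedFactors a)]
  refine (Multiset.card_eq_card_of_rel (factors_unique ?_ ?_ ?_)).symm
  · simp only [Multiset.mem_map]
    rintro _ ⟨x, hx, rfl⟩
    exact (MulEquiv.irreducible_iff e).mpr (irreducible_of_normalized_factor x hx)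
  · exact fun x hx => irreducible_of_normalized_factor x hx
  · rw [← map_multiset_prod]
    exact ((prod_normalizedFactors ha).map e).trans (prod_normalizedFactors hea).symm

section Field

variable {K : Type*} [Field K] [DecidableEq K]

theorem Polynomial.normalizedFactors_X_sub_C (a : K) :
    normalizedFactors (X - C a) = {X - C a} := by
  rw [normalizedFactors_irreducible (irreducible_X_sub_C a), (monic_X_sub_C a).normalize_eq_self]

theorem Polynomial.card_normalizedFactors_X_pow_sub_C_pow {y : K} (hy : y ≠ 0) (n : ℕ) :
    Multiset.card (normalizedFactors (X ^ n - C (y ^ n))) =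
      Multiset.card (normalizedFactors (X ^ n - 1 : K[X])) := by
  obtain ⟨e, he⟩ :
      ∃ e : K[X] ≃ₐ[K] K[X], e (X ^ n - C (y ^ n)) = C (y ^ n) * (X ^ n - 1) :=
    ⟨algEquivOfCompEqX (C y * X) (C y⁻¹ * X) (by simp [← mul_assoc, ← C_mul, hy])
      (by simp [← mul_assoc, ← C_mul, hy]), by
      simp only [algEquivOfCompEqX_apply, map_sub, map_pow, aeval_X, aeval_C, algebraMap_eq]
      ring⟩
  have hassoc : Associated (X ^ n - 1 : K[X]) (C (y ^ n) * (X ^ n - 1)) :=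
    associated_unit_mul_right _ _ (isUnit_C.mpr (pow_ne_zero n hy).isUnit)
  rw [hassoc.normalizedFactors_eq, ← he]
  exact (card_normalizedFactors_map_mulEquiv e _).symm

theorem Polynomial.card_normalizedFactors_X_pow_sub_one [Finite K] {q : ℕ} [hq : Fact q.Prime]
    (hqK : (q : K) ≠ 0) :
    Multiset.card (normalizedFactors (X ^ q - 1 : K[X])) =
      1 + (q - 1) / orderOf (Nat.card K : ZMod q) := by
  have := Fintype.ofFinite K
  have : NeZero (q : K) := ⟨hqK⟩
  obtain ⟨n, hp, hcard⟩ := FiniteField.card K (ringChar K)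
  have : Fact (ringChar K).Prime := ⟨hp⟩
  have hcop : (ringChar K).Coprime q := (Nat.coprime_primes hp hq.out).mpr fun h =>
    hqK (h ▸ ringChar.Nat.cast_ringChar)
  have hcyc := normalizedFactors_cyclotomic_card hcard hcop
  rw [Multiset.toFinset_card_of_nodup
    ((squarefree_iff_nodup_normalizedFactors (cyclotomic_ne_zero q K)).mp
      (squarefree_cyclotomic q K)), Nat.totient_prime hq.out] at hcyc
  rw [← cyclotomic_prime_mul_X_sub_one, ← C_1, normalizedFactors_mul (cyclotomic_ne_zero q K)
    (X_sub_C_ne_zero 1), normalizedFactors_X_sub_C, Multiset.card_add, hcyc,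
    Multiset.card_singleton, add_comm, ← orderOf_units, ZMod.coe_unitOfCoprime,
    Nat.card_eq_fintype_card, hcard, Nat.cast_pow]

end Field

theorem minpoly_eq_X_pow_sub_C {A K B : Type*} [CommRing A] [IsDomain A] [IsIntegrallyClosed A]
    [Field K] [Algebra A K] [IsFractionRing A K] [CommRing B] [IsDomain B] [Algebra A B]
    [Module.IsTorsionFree A B] {n : ℕ} {x : B} {a : A}
    (hirr : Irreducible (X ^ n - C (algebraMap A K a))) (hxa : x ^ n = algebraMap A B a) :
    minpoly A x = X ^ n - C a := by
  have hn : n ≠ 0 := by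
    rintro rfl
    rw [pow_zero, ← C_1, ← C_sub] at hirr
    exact not_irreducible_C _ hirr
  have hmon : (X ^ n - C a).Monic := monic_X_pow_sub_C a hn
  have hx : IsIntegral A x := .of_pow (Nat.pos_of_ne_zero hn) (hxa ▸ isIntegral_algebraMap)
  have hirrA : Irreducible (X ^ n - C a) :=
    hmon.irreducible_iff_irreducible_map_fraction_map.mpr (by simpa using hirr)
  refine eq_of_monic_of_associated (minpoly.monic hx) hmon
    ((minpoly.irreducible hx).associated_of_dvd hirrA (minpoly.isIntegrallyClosed_dvd hx ?_))
  simp [hxa]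

section Conductor

variable (A K L : Type*) {B : Type*} [CommRing A] [Field K] [CommRing B] [Field L]
  [Algebra A K] [Algebra B L] [Algebra A B] [Algebra K L] [Algebra A L]
  [IsScalarTower A K L] [IsScalarTower A B L] [IsDomain A] [IsFractionRing A K]
  [IsIntegrallyClosed A] [FiniteDimensional K L] [Algebra.IsSeparable K L] [IsIntegralClosure B A L]
  [IsDedekindDomain B] [Module.IsTorsionFree A B]

theorem aeval_derivative_minpoly_mem_conductor {x : B}
    (hx : Algebra.adjoin K {algebraMap B L x} = ⊤) :
    aeval x (derivative (minpoly A x)) ∈ conductor A x := by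
  refine Ideal.mul_le_left (J := differentIdeal A B) ?_
  rw [conductor_mul_differentIdeal A K L x hx]
  exact Ideal.mem_span_singleton_self _

theorem comap_conductor_sup_eq_top_of_minpoly_eq_X_pow_sub_C {x : B}
    (hx : Algebra.adjoin K {algebraMap B L x} = ⊤) {n : ℕ} {a : A}
    (hmin : minpoly A x = X ^ n - C a) {p : Ideal A} [hp : p.IsMaximal]
    (hn : (n : A) ∉ p) (ha : a ∉ p) :
    (conductor A x).comap (algebraMap A B) ⊔ p = ⊤ := by
  have hn0 : n ≠ 0 := by
    rintro rfl
    exact hn (Nat.cast_zero (R := A) ▸ p.zero_mem)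
  have hxa : x ^ n = algebraMap A B a := by
    have h := minpoly.aeval A x
    rwa [hmin, map_sub, aeval_X_pow, aeval_C, sub_eq_zero] at h
  have hmem : (n : A) * a ∈ (conductor A x).comap (algebraMap A B) := by
    have := Ideal.mul_mem_right x _ (aeval_derivative_minpoly_mem_conductor A K L hx)
    rw [hmin] at this
    simp only [derivative_sub, derivative_X_pow, derivative_C, sub_zero, map_mul, map_natCast,
      map_pow, aeval_X] at this
    rwa [mul_assoc, ← pow_succ, Nat.sub_add_cancel (Nat.pos_of_ne_zero hn0), hxa, ← map_natCast
      (algebraMap A B), ← map_mul, ← Ideal.mem_comap] at this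
  rw [sup_comm, ← codisjoint_iff]
  exact (Ideal.isMaximal_def.mp hp).not_le_iff_codisjoint.mp fun hle =>
    (hp.isPrime.mul_notMem hn ha) (hle hmem)

end Conductor

section KummerDedekind

variable {R S : Type*} [CommRing R] [IsDomain R] [IsIntegrallyClosed R] [CommRing S]
  [IsDedekindDomain S] [Algebra R S] [Module.IsTorsionFree R S]

attribute [local instance] Ideal.Quotient.field

open scoped Classical in
theorem Ideal.card_primesOver_eq_card_normalizedFactors_minpoly {p : Ideal R} [p.IsMaximal]
    (hp : p ≠ ⊥) {x : S} (hx : IsIntegral R x)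
    (hcond : (conductor R x).comap (algebraMap R S) ⊔ p = ⊤)
    (hsq : Squarefree ((minpoly R x).map (Ideal.Quotient.mk p))) :
    Nat.card (p.primesOver S) =
      Multiset.card (normalizedFactors ((minpoly R x).map (Ideal.Quotient.mk p))) := by
  have hmap : (minpoly R x).map (Ideal.Quotient.mk p) ≠ 0 := map_monic_ne_zero (minpoly.monic hx)
  have hprimes : p.primesOver S = {J | J ∈ normalizedFactors (p.map (algebraMap R S))} := by
    ext
    exact mem_primesOver_iff_mem_normalizedFactors _ hp
  rw [hprimes, Nat.card_congr
    (KummerDedekind.normalizedFactorsMapEquivNormalizedFactorsMinPolyMk inferInstance hp hcond hx),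
    ← Multiset.toFinset_card_of_nodup ((squarefree_iff_nodup_normalizedFactors hmap).mp hsq),
    ← Nat.card_eq_finsetCard]
  simp only [Multiset.mem_toFinset]
  rfl

end KummerDedekind

theorem stmt_10_general (q : ℕ) (hq : q.Prime)
    (K L : Type*) [Field K] [NumberField K] [Field L] [NumberField L] [Algebra K L]
    (α : 𝓞 K)
    (hαpow : ¬ ∃ x : K, x ^ q = algebraMap (𝓞 K) K α)
    (β : L) (hβ : β ^ q = algebraMap K L (algebraMap (𝓞 K) K α))
    (hgen : Algebra.adjoin K {β} = ⊤)
    (p : Ideal (𝓞 K)) [p.IsMaximal] (hp : p ≠ ⊥)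
    (hpq : (q : 𝓞 K) ∉ p) (hpα : α ∉ p) :
    ((∃ y : 𝓞 K ⧸ p, y ^ q = Ideal.Quotient.mk p α) →
      Nat.card {Q : Ideal (𝓞 L) // Q.IsPrime ∧ Q.LiesOver p} =
        1 + (q - 1) / orderOf ((Nat.card (𝓞 K ⧸ p) : ZMod q))) ∧
    ((¬ ∃ y : 𝓞 K ⧸ p, y ^ q = Ideal.Quotient.mk p α) →
      Nat.card {Q : Ideal (𝓞 L) // Q.IsPrime ∧ Q.LiesOver p} = 1) := by
  have : Fact q.Prime := ⟨hq⟩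
  have hβ' : β ^ q = algebraMap (𝓞 L) L (algebraMap (𝓞 K) (𝓞 L) α) := by
    rw [hβ, ← IsScalarTower.algebraMap_apply, ← IsScalarTower.algebraMap_apply]
  obtain ⟨B, rfl⟩ : ∃ B : 𝓞 L, algebraMap (𝓞 L) L B = β :=
    ⟨⟨β, .of_pow hq.pos (hβ' ▸ RingOfIntegers.isIntegral_coe _)⟩, rfl⟩
  have hBq : B ^ q = algebraMap (𝓞 K) (𝓞 L) α :=
    FaithfulSMul.algebraMap_injective (𝓞 L) L (by rw [map_pow, hβ'])
  have hmin : minpoly (𝓞 K) B = X ^ q - C α :=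
    minpoly_eq_X_pow_sub_C (K := K)
      (X_pow_sub_C_irreducible_of_prime hq fun b hb => hαpow ⟨b, hb⟩) hBq
  have hcond := comap_conductor_sup_eq_top_of_minpoly_eq_X_pow_sub_C (𝓞 K) K L hgen hmin hpq hpα
  let := Ideal.Quotient.field p
  classical
  have hqp : (q : 𝓞 K ⧸ p) ≠ 0 := by
    rwa [← map_natCast (Ideal.Quotient.mk p), Ne, Ideal.Quotient.eq_zero_iff_mem]
  have hαp : Ideal.Quotient.mk p α ≠ 0 := by
    rwa [Ne, Ideal.Quotient.eq_zero_iff_mem]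
  have hred :
      (minpoly (𝓞 K) B).map (Ideal.Quotient.mk p) = X ^ q - C (Ideal.Quotient.mk p α) := by
    simp [hmin]
  have hcount : Nat.card {Q : Ideal (𝓞 L) // Q.IsPrime ∧ Q.LiesOver p} =
      Multiset.card (normalizedFactors (X ^ q - C (Ideal.Quotient.mk p α))) := by
    rw [← hred]
    exact Ideal.card_primesOver_eq_card_normalizedFactors_minpoly hp
      (IsIntegralClosure.isIntegral (𝓞 K) L B) hcond
      (hred ▸ (separable_X_pow_sub_C _ hqp hαp).squarefree)
  have : Finite (𝓞 K ⧸ p) := Ideal.finiteQuotientOfFreeOfNeBot p hp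
  refine ⟨fun ⟨y, hy⟩ => ?_, fun hnot => ?_⟩
  · have hy0 : y ≠ 0 := by
      rintro rfl
      exact hαp (by rw [← hy, zero_pow hq.ne_zero])
    rw [hcount, ← hy, card_normalizedFactors_X_pow_sub_C_pow hy0,
      card_normalizedFactors_X_pow_sub_one hqp]
  · rw [hcount, normalizedFactors_irreducible
      (X_pow_sub_C_irreducible_of_prime hq fun b hb => hnot ⟨b, hb⟩), Multiset.card_singleton]

/-- Let `K ⊆ L` be number fields with `L = K(α^{1/q})` of degree `q` (an odd prime), where
`α ∈ 𝓞 K` is not a `q`th power in `K`.  Let `p` be a finite prime of `K` not dividing `q`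
nor `α`, unramified in `L`, with residue field of size `N`.  Then the number of primes of `L`
above `p` is `1` if the reduction of `α` is not a `q`th power in the residue field, and is
`1 + (q−1)/a` otherwise, where `a` is the multiplicative order of `N` modulo `q`. -/
theorem stmt_10 (q : ℕ) (hq : q.Prime) (hodd : Odd q)
    (K L : Type*) [Field K] [NumberField K] [Field L] [NumberField L] [Algebra K L]
    (α : 𝓞 K) (hα0 : α ≠ 0)
    (hαpow : ¬ ∃ x : K, x ^ q = algebraMap (𝓞 K) K α)
    (β : L) (hβ : β ^ q = algebraMap K L (algebraMap (𝓞 K) K α))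
    (hgen : Algebra.adjoin K {β} = ⊤) (hdeg : Module.finrank K L = q)
    (p : Ideal (𝓞 K)) [p.IsMaximal] (hp : p ≠ ⊥)
    (hpq : (q : 𝓞 K) ∉ p) (hpα : α ∉ p)
    (hunram : ∀ Q : Ideal (𝓞 L), Q.IsPrime → Q.LiesOver p →
      Ideal.ramificationIdx' p Q = 1) :
    ((∃ y : 𝓞 K ⧸ p, y ^ q = Ideal.Quotient.mk p α) →
      Nat.card {Q : Ideal (𝓞 L) // Q.IsPrime ∧ Q.LiesOver p} =
        1 + (q - 1) / orderOf ((Nat.card (𝓞 K ⧸ p) : ZMod q))) ∧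
    ((¬ ∃ y : 𝓞 K ⧸ p, y ^ q = Ideal.Quotient.mk p α) →
      Nat.card {Q : Ideal (𝓞 L) // Q.IsPrime ∧ Q.LiesOver p} = 1) :=
  stmt_10_general q hq K L α hαpow β hβ hgen p hp hpq hpα
end
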